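/- Under the sharp-threshold scaling n(λ) = √λ · e^{αλD} with two-sided bounds (1/√(2πcλ)) e^{−λD − 1/(12cλ)} ≤ q(λ) ≤ e^{−λD}, the system false-alert probability P(λ) = 1 − (1 − q(λ))^{⌊n(λ)⌋} tends to 0 as λ → ∞ if α < 1 and tends to 1 as λ → ∞ if α > 1. -/

import Mathlib

/-!
With `m = ⌊n(λ)⌋` the system probability `1 - (1 - q)^m` is squeezed between `1 - e^{-m q}` and
`m q`, so it tends to `0` when the expected number of false alerts `m q` tends to `0`, and to `1`
when `m q` tends to infinity. Up to the factor `√λ` and bounded corrections, `m q` is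
`e^{(α - 1) λ D}`, and `D > 0` because `c log c - c + 1` is the strictly convex function
`x log x - x + 1` evaluated away from its minimum at `x = 1`.
-/

open Filter Real Topology

theorem Real.mul_log_sub_add_one_pos {c : ℝ} (hc₀ : 0 < c) (hc₁ : c ≠ 1) :
    0 < c * log c - c + 1 := by
  have h := log_lt_sub_one_of_pos (inv_pos.2 hc₀) (inv_ne_one.2 hc₁)
  rw [log_inv, lt_sub_iff_add_lt, ← mul_lt_mul_iff_of_pos_left hc₀, mul_add,
    mul_inv_cancel₀ hc₀.ne'] at h
  linarith

theorem one_sub_one_sub_pow_le_mul {q : ℝ} (hq : q ≤ 2) (m : ℕ) : 1 - (1 - q) ^ m ≤ m * q := by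
  have := one_add_mul_le_pow (a := -q) (by linarith) m
  rw [← sub_eq_add_neg] at this
  linarith

theorem one_sub_exp_neg_mul_le_one_sub_one_sub_pow {q : ℝ} (hq : q ≤ 1) (m : ℕ) :
    1 - exp (-(m * q)) ≤ 1 - (1 - q) ^ m := by
  have : (1 - q) ^ m ≤ exp (-q) ^ m := pow_le_pow_left₀ (by linarith) (one_sub_le_exp_neg q) m
  rw [← exp_nat_mul, mul_neg] at this
  linarith

section SystemProbability

variable {ι : Type*} {l : Filter ι} {q : ι → ℝ} {m : ι → ℕ}

theorem tendsto_one_sub_one_sub_pow_nhds_zero (hq : ∀ᶠ i in l, q i ≤ 1)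
    (h : Tendsto (fun i => m i * q i) l (𝓝 0)) :
    Tendsto (fun i => 1 - (1 - q i) ^ m i) l (𝓝 0) := by
  have hlower : Tendsto (fun i => 1 - exp (-(m i * q i))) l (𝓝 0) := by
    simpa using (tendsto_const_nhds (x := (1 : ℝ))).sub ((continuous_exp.tendsto _).comp h.neg)
  refine tendsto_of_tendsto_of_tendsto_of_le_of_le' hlower h ?_ ?_
  · filter_upwards [hq] with i hi using one_sub_exp_neg_mul_le_one_sub_one_sub_pow hi (m i)
  · filter_upwards [hq] with i hi using one_sub_one_sub_pow_le_mul (by linarith) (m i)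

theorem tendsto_one_sub_one_sub_pow_nhds_one (hq : ∀ᶠ i in l, q i ≤ 1)
    (h : Tendsto (fun i => m i * q i) l atTop) :
    Tendsto (fun i => 1 - (1 - q i) ^ m i) l (𝓝 1) := by
  have hlower : Tendsto (fun i => 1 - exp (-(m i * q i))) l (𝓝 1) := by
    simpa using tendsto_const_nhds.sub (tendsto_exp_atBot.comp (tendsto_neg_atTop_atBot.comp h))
  refine tendsto_of_tendsto_of_tendsto_of_le_of_le' hlower tendsto_const_nhds ?_ ?_
  · filter_upwards [hq] with i hi using one_sub_exp_neg_mul_le_one_sub_one_sub_pow hi (m i)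
  · filter_upwards [hq] with i hi
    have : 0 ≤ (1 - q i) ^ m i := pow_nonneg (by linarith) _
    linarith

end SystemProbability

section ExpectedFalseAlerts

variable {c D α : ℝ} {q : ℝ → ℝ}

theorem tendsto_floor_sqrt_mul_exp_mul_nhds_zero (hD : 0 < D) (hα : α < 1)
    (hq : ∀ᶠ lam in atTop, q lam ∈ Set.Icc 0 (exp (-lam * D))) :
    Tendsto (fun lam => ⌊√lam * exp (α * lam * D)⌋₊ * q lam) atTop (𝓝 0) := by
  have hdecay := tendsto_rpow_mul_exp_neg_mul_atTop_nhds_zero (1 / 2) ((1 - α) * D)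
    (mul_pos (by linarith) hD)
  refine squeeze_zero' ?_ ?_ hdecay
  · filter_upwards [hq] with lam hlam using mul_nonneg (Nat.cast_nonneg _) hlam.1
  · filter_upwards [hq] with lam hlam
    calc (⌊√lam * exp (α * lam * D)⌋₊ : ℝ) * q lam
        ≤ √lam * exp (α * lam * D) * exp (-lam * D) := by
          gcongr
          · exact hlam.1
          · exact Nat.floor_le (by positivity)
          · exact hlam.2
      _ = lam ^ (1 / 2 : ℝ) * exp (-((1 - α) * D) * lam) := by
          rw [sqrt_eq_rpow, mul_assoc, ← exp_add]
          ring_nf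

theorem sqrt_mul_exp_mul_mul_stirling_lower_eq {lam : ℝ} (hc : 0 < c) (hlam : 0 < lam) :
    √lam * exp (α * lam * D) *
        (1 / √(2 * π * c * lam) * exp (-lam * D - 1 / (12 * c * lam))) =
      exp ((α - 1) * D * lam - 1 / (12 * c * lam)) / √(2 * π * c) := by
  have hsqrt : 0 < √lam := sqrt_pos.2 hlam
  have hconst : 0 < √(2 * π * c) := sqrt_pos.2 (by positivity)
  rw [sqrt_mul (by positivity), show (α - 1) * D * lam - 1 / (12 * c * lam) =
    α * lam * D + (-lam * D - 1 / (12 * c * lam)) by ring, exp_add]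
  field_simp

theorem tendsto_floor_sqrt_mul_exp_mul_atTop (hc : 0 < c) (hD : 0 < D) (hα : 1 < α)
    (hq : ∀ᶠ lam in atTop,
      q lam ∈ Set.Icc (1 / √(2 * π * c * lam) * exp (-lam * D - 1 / (12 * c * lam))) 1) :
    Tendsto (fun lam => ⌊√lam * exp (α * lam * D)⌋₊ * q lam) atTop atTop := by
  have hcorrection : Tendsto (fun lam => 1 / (12 * c * lam)) atTop (𝓝 0) :=
    tendsto_const_nhds.div_atTop (tendsto_id.const_mul_atTop (by positivity))
  have hexponent : Tendsto (fun lam => (α - 1) * D * lam - 1 / (12 * c * lam)) atTop atTop := by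
    simpa only [sub_eq_add_neg, id_eq] using
      (tendsto_id.const_mul_atTop (mul_pos (by linarith) hD)).atTop_add hcorrection.neg
  have hgrowth : Tendsto
      (fun lam => exp ((α - 1) * D * lam - 1 / (12 * c * lam)) / √(2 * π * c) - 1) atTop atTop := by
    simpa only [sub_eq_add_neg, Function.comp_apply] using tendsto_atTop_add_const_right atTop (-1)
      ((tendsto_exp_atTop.comp hexponent).atTop_div_const (sqrt_pos.2 (by positivity)))
  refine tendsto_atTop_mono' _ ?_ hgrowth
  filter_upwards [hq, eventually_gt_atTop 0] with lam ⟨hq_lower, hq_le_one⟩ hlam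
  have hq_nonneg : 0 ≤ q lam := le_trans (by positivity) hq_lower
  set x := √lam * exp (α * lam * D)
  have hx : 0 ≤ x := by positivity
  have hexpected : exp ((α - 1) * D * lam - 1 / (12 * c * lam)) / √(2 * π * c) ≤ x * q lam := by
    rw [← sqrt_mul_exp_mul_mul_stirling_lower_eq hc hlam]
    gcongr
  calc exp ((α - 1) * D * lam - 1 / (12 * c * lam)) / √(2 * π * c) - 1
      ≤ x * q lam - q lam := by linarith
    _ = (x - 1) * q lam := by ring
    _ ≤ ⌊x⌋₊ * q lam := mul_le_mul_of_nonneg_right (Nat.sub_one_lt_floor x).le hq_nonneg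

end ExpectedFalseAlerts

theorem sharp_threshold_system_probability_general (c D α : ℝ) (hc : 1 < c)
    (hD : D = c * Real.log c - c + 1)
    (q : ℝ → ℝ) (hq01 : ∀ lam : ℝ, 1 ≤ lam → q lam ∈ Set.Ioo (0 : ℝ) 1)
    (hq : ∀ lam : ℝ, 1 ≤ lam →
      (1 / Real.sqrt (2 * Real.pi * c * lam)) *
          Real.exp (-lam * D - 1 / (12 * c * lam)) ≤ q lam ∧
        q lam ≤ Real.exp (-lam * D))
    (n : ℝ → ℝ) (hn : ∀ lam : ℝ, n lam = Real.sqrt lam * Real.exp (α * lam * D)) :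
    (α < 1 → Tendsto (fun lam => 1 - (1 - q lam) ^ (Nat.floor (n lam))) atTop (nhds 0)) ∧
    (1 < α → Tendsto (fun lam => 1 - (1 - q lam) ^ (Nat.floor (n lam))) atTop (nhds 1)) := by
  obtain rfl : n = fun lam => √lam * exp (α * lam * D) := funext hn
  have hD_pos : 0 < D := hD ▸ mul_log_sub_add_one_pos (by linarith) hc.ne'
  have hq_le_one : ∀ᶠ lam in atTop, q lam ≤ 1 :=
    (eventually_ge_atTop 1).mono fun lam hlam => (hq01 lam hlam).2.le
  refine ⟨fun hα => tendsto_one_sub_one_sub_pow_nhds_zero hq_le_one ?_,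
    fun hα => tendsto_one_sub_one_sub_pow_nhds_one hq_le_one ?_⟩
  · refine tendsto_floor_sqrt_mul_exp_mul_nhds_zero hD_pos hα ?_
    filter_upwards [eventually_ge_atTop 1] with lam hlam
    exact ⟨(hq01 lam hlam).1.le, (hq lam hlam).2⟩
  · refine tendsto_floor_sqrt_mul_exp_mul_atTop (one_pos.trans hc) hD_pos hα ?_
    filter_upwards [eventually_ge_atTop 1] with lam hlam
    exact ⟨(hq lam hlam).1, (hq01 lam hlam).2.le⟩

/-- Sharp threshold for the system-level false-alert probability
`P(λ) = 1 − (1 − q(λ))^{⌊n(λ)⌋}`: it tends to `0` if `α < 1` and to `1` if `α > 1`. -/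
theorem sharp_threshold_system_probability (c D α : ℝ) (hc : 1 < c)
    (hD : D = c * Real.log c - c + 1) (hα : 0 < α) (hα1 : α ≠ 1)
    (q : ℝ → ℝ) (hq01 : ∀ lam : ℝ, 1 ≤ lam → q lam ∈ Set.Ioo (0 : ℝ) 1)
    (hq : ∀ lam : ℝ, 1 ≤ lam →
      (1 / Real.sqrt (2 * Real.pi * c * lam)) *
          Real.exp (-lam * D - 1 / (12 * c * lam)) ≤ q lam ∧
        q lam ≤ Real.exp (-lam * D))
    (n : ℝ → ℝ) (hn : ∀ lam : ℝ, n lam = Real.sqrt lam * Real.exp (α * lam * D)) :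
    (α < 1 → Tendsto (fun lam => 1 - (1 - q lam) ^ (Nat.floor (n lam))) atTop (nhds 0)) ∧
    (1 < α → Tendsto (fun lam => 1 - (1 - q lam) ^ (Nat.floor (n lam))) atTop (nhds 1)) :=
  sharp_threshold_system_probability_general c D α hc hD q hq01 hq n hn
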